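/- Let ρ, ψ ∈ L^∞(ℝ^d) with ρ, ψ ≥ 0 and ‖ρ‖_{L^∞}, ‖ψ‖_{L^∞} ≤ M. Then for every x ∈ ℝ^d, (1/2) ∫∫ c₁(y,z;x) | exp(−∫ φ₁(x−u) ρ(u) du) ρ(y) ρ(z) − exp(−∫ φ₁(x−u) ψ(u) du) ψ(y) ψ(z) | dy dz ≤ (1/2) ⟨c₁⟩ ( 2M + ⟨φ₁⟩ M² ) ‖ρ − ψ‖_{L^∞}. -/

import Mathlib

open MeasureTheory Set

noncomputable section

/-- Euclidean space `ℝ^d`, modeled as functions `Fin d → ℝ`. -/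
abbrev Rd (d : ℕ) := Fin d → ℝ

/-- The (sup) `L^∞` norm of a function on `ℝ^d`. -/
def linf {d : ℕ} (f : Rd d → ℝ) : ℝ := ⨆ x, |f x|

/-- Membership in `L^∞(ℝ^d)`: measurable and (everywhere) bounded. -/
def MemLinf {d : ℕ} (f : Rd d → ℝ) : Prop := Measurable f ∧ ∃ M : ℝ, ∀ x, |f x| ≤ M

/-- `h(ρ,x) = (1/2) ∬ (c₁(x,y;z)+c₁(y,x;z)) ρ(y) dy dz + ⟨c₂⟩`. -/
def hker {d : ℕ} (c₁ : Rd d → Rd d → Rd d → ℝ) (C2 : ℝ) (ρ : Rd d → ℝ) (x : Rd d) : ℝ :=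
  1/2 * (∫ y, ∫ z, (c₁ x y z + c₁ y x z) * ρ y) + C2

/-- `R₂(ρ,x)`, the positive part of the right-hand side of the kinetic equation. -/
def R2 {d : ℕ} (c₁ : Rd d → Rd d → Rd d → ℝ) (c₂ : Rd d → Rd d → ℝ)
    (φ₁ φ₂ : Rd d → ℝ) (ρ : Rd d → ℝ) (x : Rd d) : ℝ :=
  1/2 * (∫ y, ∫ z, c₁ y z x * Real.exp (-∫ u, φ₁ (x - u) * ρ u) * ρ y * ρ z)
    + 1/2 * (∫ y, ∫ z, (c₁ x y z + c₁ y x z) *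
        (1 - Real.exp (-∫ u, φ₁ (z - u) * ρ u)) * ρ x * ρ y)
    + (∫ y, c₂ y x * Real.exp (-∫ u, φ₂ (x - u) * ρ u) * ρ y)
    + (∫ y, c₂ x y * (1 - Real.exp (-∫ u, φ₂ (y - u) * ρ u)) * ρ x)

/-- The fixed point map `F` given by the right-hand side of the integral equation. -/
def Fmap {d : ℕ} (c₁ : Rd d → Rd d → Rd d → ℝ) (c₂ : Rd d → Rd d → ℝ)
    (φ₁ φ₂ : Rd d → ℝ) (C2 : ℝ) (ρ₀ : Rd d → ℝ) (ρ : ℝ → Rd d → ℝ) (t : ℝ) (x : Rd d) : ℝ :=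
  ρ₀ x * Real.exp (-∫ s in (0:ℝ)..t, hker c₁ C2 (ρ s) x)
    + ∫ s in (0:ℝ)..t, R2 c₁ c₂ φ₁ φ₂ (ρ s) x * Real.exp (-∫ σ in s..t, hker c₁ C2 (ρ σ) x)

/-- The weighted norm `‖ρ‖_{T,γ} = sup_{t∈[0,T]} e^{-γ⟨c₂⟩t} ‖ρ_t‖_{L^∞}`. -/
def normTg {d : ℕ} (T γ C2 : ℝ) (ρ : ℝ → Rd d → ℝ) : ℝ :=
  ⨆ t : Icc (0:ℝ) T, Real.exp (-(γ * C2 * t.1)) * linf (ρ t.1)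

/-- Continuity on `S ⊆ ℝ` of a curve of functions, in the `L^∞` norm. -/
def LinfContOn {d : ℕ} (S : Set ℝ) (ρ : ℝ → Rd d → ℝ) : Prop :=
  ∀ t ∈ S, ∀ ε > 0, ∃ δ > 0, ∀ s ∈ S, |s - t| < δ → linf (fun x => ρ s x - ρ t x) < ε

/-- Membership in the ball `B_{T,γ}(r) ⊆ C([0,T] → L^∞)`. -/
def memB {d : ℕ} (T γ C2 r : ℝ) (ρ : ℝ → Rd d → ℝ) : Prop :=
  LinfContOn (Icc 0 T) ρ ∧ (∀ t ∈ Icc (0:ℝ) T, MemLinf (ρ t)) ∧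
    (∀ t ∈ Icc (0:ℝ) T, ∀ x, 0 ≤ ρ t x) ∧ normTg T γ C2 ρ ≤ r

/-- Differentiability at `t` (within `S ⊆ ℝ`) of a curve, in the `L^∞` norm,
with derivative `g`. -/
def HasLinfDerivWithinAt {d : ℕ} (ρ : ℝ → Rd d → ℝ) (g : Rd d → ℝ) (S : Set ℝ) (t : ℝ) : Prop :=
  ∀ ε > 0, ∃ δ > 0, ∀ s ∈ S, |s - t| < δ →
    linf (fun x => ρ s x - ρ t x - (s - t) * g x) ≤ ε * |s - t|

/-- The right-hand side of the kinetic equation: `−ρ(x) h(ρ,x) + R₂(ρ,x)`. -/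
def kderiv {d : ℕ} (c₁ : Rd d → Rd d → Rd d → ℝ) (c₂ : Rd d → Rd d → ℝ)
    (φ₁ φ₂ : Rd d → ℝ) (C2 : ℝ) (ρ : Rd d → ℝ) : Rd d → ℝ :=
  fun x => -(ρ x) * hker c₁ C2 ρ x + R2 c₁ c₂ φ₁ φ₂ ρ x

/-- `ρ` is a (local) classical solution of the kinetic equation on `[0,T]` with initial
value `ρ₀`: nonnegative and `L^∞`-valued, continuously differentiable in the `L^∞` norm,
and satisfying `d/dt ρ_t = −ρ_t·h(ρ_t,·) + R₂(ρ_t,·)`, `ρ_0 = ρ₀`. -/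
def IsSol {d : ℕ} (c₁ : Rd d → Rd d → Rd d → ℝ) (c₂ : Rd d → Rd d → ℝ)
    (φ₁ φ₂ : Rd d → ℝ) (C2 : ℝ) (ρ₀ : Rd d → ℝ) (T : ℝ) (ρ : ℝ → Rd d → ℝ) : Prop :=
  (∀ t ∈ Icc (0:ℝ) T, MemLinf (ρ t)) ∧ (∀ t ∈ Icc (0:ℝ) T, ∀ x, 0 ≤ ρ t x) ∧
    ρ 0 = ρ₀ ∧
    (∀ t ∈ Icc (0:ℝ) T, HasLinfDerivWithinAt ρ (kderiv c₁ c₂ φ₁ φ₂ C2 (ρ t)) (Icc 0 T) t) ∧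
    LinfContOn (Icc 0 T) (fun t => kderiv c₁ c₂ φ₁ φ₂ C2 (ρ t))

/-!
Write `e^{-a} ρ(y) ρ(z) - e^{-b} ψ(y) ψ(z)` as
`e^{-a} (ρ(y) ρ(z) - ψ(y) ψ(z)) + (e^{-a} - e^{-b}) ψ(y) ψ(z)`,
where `a, b ≥ 0` are the two convolutions. Since `e^{-a} ≤ 1`, the first term is at most
`2 M ‖ρ - ψ‖`; since `t ↦ e^{-t}` is `1`-Lipschitz on `[0, ∞)` and `|a - b| ≤ ⟨φ₁⟩ ‖ρ - ψ‖`,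
the second is at most `⟨φ₁⟩ M² ‖ρ - ψ‖`. Integrating this pointwise bound against
`c₁(·, ·; x)` gives the factor `⟨c₁⟩`.
-/

section Linf

variable {d : ℕ} {f g : Rd d → ℝ}

lemma MemLinf.bddAbove_abs (hf : MemLinf f) : BddAbove (range fun x => |f x|) := by
  obtain ⟨-, M, hM⟩ := hf
  exact ⟨M, by rintro - ⟨x, rfl⟩; exact hM x⟩

lemma MemLinf.sub (hf : MemLinf f) (hg : MemLinf g) : MemLinf fun x => f x - g x := by
  obtain ⟨hfm, Mf, hMf⟩ := hf
  obtain ⟨hgm, Mg, hMg⟩ := hg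
  exact ⟨hfm.sub hgm, Mf + Mg, fun x => (abs_sub _ _).trans (add_le_add (hMf x) (hMg x))⟩

lemma MemLinf.abs_le_linf (hf : MemLinf f) (x : Rd d) : |f x| ≤ linf f :=
  le_ciSup hf.bddAbove_abs x

lemma MemLinf.integrable_mul {w : Rd d → ℝ} {μ : Measure (Rd d)} (hw : Integrable w μ)
    (hf : MemLinf f) : Integrable (fun x => w x * f x) μ :=
  hw.mul_bdd hf.1.aestronglyMeasurable
    (ae_of_all _ fun x => (Real.norm_eq_abs (f x)).symm ▸ hf.abs_le_linf x)

end Linf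

lemma abs_exp_neg_sub_exp_neg_le {a b : ℝ} (ha : 0 ≤ a) (hb : 0 ≤ b) :
    |Real.exp (-a) - Real.exp (-b)| ≤ |a - b| := by
  wlog hba : b ≤ a generalizing a b
  · rw [abs_sub_comm, abs_sub_comm a]
    exact this hb ha (le_of_not_ge hba)
  rw [abs_sub_comm, abs_of_nonneg (sub_nonneg.2 (Real.exp_le_exp.2 (neg_le_neg hba))),
    abs_of_nonneg (sub_nonneg.2 hba)]
  have hsplit : Real.exp (-b) - Real.exp (-a) = Real.exp (-b) * (1 - Real.exp (-(a - b))) := by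
    rw [mul_sub, mul_one, ← Real.exp_add]
    ring_nf
  have hexp_b : Real.exp (-b) ≤ 1 := Real.exp_le_one_iff.2 (neg_nonpos.2 hb)
  have hgap : 1 - Real.exp (-(a - b)) ≤ a - b := by linarith [Real.one_sub_le_exp_neg (a - b)]
  have hgap0 : 0 ≤ 1 - Real.exp (-(a - b)) :=
    sub_nonneg.2 (Real.exp_le_one_iff.2 (neg_nonpos.2 (sub_nonneg.2 hba)))
  rw [hsplit]
  calc Real.exp (-b) * (1 - Real.exp (-(a - b))) ≤ 1 * (a - b) :=
        mul_le_mul hexp_b hgap hgap0 zero_le_one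
    _ = a - b := one_mul _

lemma abs_integral_mul_sub_integral_mul_le {α : Type*} [MeasurableSpace α] {μ : Measure α}
    {w f g : α → ℝ} {K : ℝ} (hw : Integrable w μ) (hw0 : ∀ u, 0 ≤ w u)
    (hwf : Integrable (fun u => w u * f u) μ) (hwg : Integrable (fun u => w u * g u) μ)
    (hfg : ∀ u, |f u - g u| ≤ K) :
    |(∫ u, w u * f u ∂μ) - ∫ u, w u * g u ∂μ| ≤ (∫ u, w u ∂μ) * K := by
  rw [← integral_sub hwf hwg, ← integral_mul_const]
  have hpoint : ∀ u, ‖w u * f u - w u * g u‖ ≤ w u * K := fun u => by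
    rw [Real.norm_eq_abs, ← mul_sub, abs_mul, abs_of_nonneg (hw0 u)]
    exact mul_le_mul_of_nonneg_left (hfg u) (hw0 u)
  simpa only [Real.norm_eq_abs] using
    norm_integral_le_of_norm_le (hw.mul_const K) (ae_of_all _ hpoint)

lemma abs_mul_sub_mul_le {p q p' q' M K : ℝ} (hp : |p - p'| ≤ K) (hq : |q - q'| ≤ K)
    (hqM : |q| ≤ M) (hp'M : |p'| ≤ M) : |p * q - p' * q'| ≤ 2 * M * K := by
  have hK : 0 ≤ K := (abs_nonneg _).trans hp
  have hM : 0 ≤ M := (abs_nonneg _).trans hqM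
  calc |p * q - p' * q'| = |(p - p') * q + p' * (q - q')| := by ring_nf
    _ ≤ |p - p'| * |q| + |p'| * |q - q'| := by
        rw [← abs_mul, ← abs_mul]; exact abs_add_le _ _
    _ ≤ K * M + M * K :=
        add_le_add (mul_le_mul hp hqM (abs_nonneg _) hK) (mul_le_mul hp'M hq (abs_nonneg _) hM)
    _ = 2 * M * K := by ring

lemma abs_mul_mul_sub_mul_mul_le {e e' p q p' q' M K L : ℝ} (he0 : 0 ≤ e) (he1 : e ≤ 1)
    (he : |e - e'| ≤ L * K) (hp : |p - p'| ≤ K) (hq : |q - q'| ≤ K)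
    (hqM : |q| ≤ M) (hp'M : |p'| ≤ M) (hq'M : |q'| ≤ M) :
    |e * p * q - e' * p' * q'| ≤ (2 * M + L * M ^ 2) * K := by
  have hLK : 0 ≤ L * K := (abs_nonneg _).trans he
  have hM : 0 ≤ M := (abs_nonneg _).trans hqM
  have hpq' : |p' * q'| ≤ M ^ 2 := by
    rw [abs_mul, sq]; exact mul_le_mul hp'M hq'M (abs_nonneg _) hM
  calc |e * p * q - e' * p' * q'| = |e * (p * q - p' * q') + (e - e') * (p' * q')| := by ring_nf
    _ ≤ e * |p * q - p' * q'| + |e - e'| * |p' * q'| := by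
        rw [← abs_of_nonneg he0, ← abs_mul, ← abs_mul, abs_of_nonneg he0]; exact abs_add_le _ _
    _ ≤ 1 * (2 * M * K) + L * K * M ^ 2 :=
        add_le_add (mul_le_mul he1 (abs_mul_sub_mul_le hp hq hqM hp'M) (abs_nonneg _) zero_le_one)
          (mul_le_mul he hpq' (abs_nonneg _) hLK)
    _ = (2 * M + L * M ^ 2) * K := by ring

lemma integral_integral_mul_le_mul {α β : Type*} [MeasurableSpace α] [MeasurableSpace β]
    {μ : Measure α} {ν : Measure β} [SFinite μ] [SFinite ν] {c F : α → β → ℝ} {B : ℝ}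
    (hc : Integrable (fun p : α × β => c p.1 p.2) (μ.prod ν)) (hc0 : ∀ y z, 0 ≤ c y z)
    (hF0 : ∀ y z, 0 ≤ F y z) (hFB : ∀ y z, F y z ≤ B) :
    ∫ y, ∫ z, c y z * F y z ∂ν ∂μ ≤ B * ∫ y, ∫ z, c y z ∂ν ∂μ := by
  rw [← integral_const_mul]
  refine integral_mono_of_nonneg (ae_of_all _ fun y => integral_nonneg fun z =>
    mul_nonneg (hc0 y z) (hF0 y z)) (hc.integral_prod_left.const_mul B) ?_
  filter_upwards [hc.prod_right_ae] with y hy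
  rw [← integral_const_mul]
  refine integral_mono_of_nonneg (ae_of_all _ fun z => mul_nonneg (hc0 y z) (hF0 y z))
    (hy.const_mul B) (ae_of_all _ fun z => ?_)
  change c y z * F y z ≤ B * c y z
  rw [mul_comm B]
  exact mul_le_mul_of_nonneg_left (hFB y z) (hc0 y z)

theorem statement9_general {d : ℕ}
    (c₁ : Rd d → Rd d → Rd d → ℝ) (C1 : ℝ)
    (hc₁nn : ∀ x y z, 0 ≤ c₁ x y z)
    (hc₁int₁₂ : ∀ z, Integrable fun p : Rd d × Rd d => c₁ p.1 p.2 z)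
    (hc₁val₁₂ : ∀ z, (∫ x, ∫ y, c₁ x y z) = C1)
    (φ₁ : Rd d → ℝ) (Φ₁ : ℝ) (hφ₁nn : ∀ u, 0 ≤ φ₁ u)
    (hφ₁int : Integrable φ₁) (hφ₁val : (∫ u, φ₁ u) = Φ₁)
    (ρ ψ : Rd d → ℝ) (hρmem : MemLinf ρ) (hρnn : ∀ x, 0 ≤ ρ x)
    (hψmem : MemLinf ψ) (hψnn : ∀ x, 0 ≤ ψ x)
    (M : ℝ) (hρM : linf ρ ≤ M) (hψM : linf ψ ≤ M) (x : Rd d) :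
    1/2 * (∫ y, ∫ z, c₁ y z x * |Real.exp (-∫ u, φ₁ (x - u) * ρ u) * ρ y * ρ z
        - Real.exp (-∫ u, φ₁ (x - u) * ψ u) * ψ y * ψ z|)
      ≤ 1/2 * C1 * (2 * M + Φ₁ * M^2) * linf (fun u => ρ u - ψ u) := by
  set K := linf fun u => ρ u - ψ u
  have hK : ∀ u, |ρ u - ψ u| ≤ K := (hρmem.sub hψmem).abs_le_linf
  have hρle : ∀ u, |ρ u| ≤ M := fun u => (hρmem.abs_le_linf u).trans hρM
  have hψle : ∀ u, |ψ u| ≤ M := fun u => (hψmem.abs_le_linf u).trans hψM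
  have hφx : Integrable fun u => φ₁ (x - u) := hφ₁int.comp_sub_left x
  set a := ∫ u, φ₁ (x - u) * ρ u
  set b := ∫ u, φ₁ (x - u) * ψ u
  have ha : 0 ≤ a := integral_nonneg fun u => mul_nonneg (hφ₁nn _) (hρnn u)
  have hb : 0 ≤ b := integral_nonneg fun u => mul_nonneg (hφ₁nn _) (hψnn u)
  have hexp : |Real.exp (-a) - Real.exp (-b)| ≤ Φ₁ * K := by
    refine (abs_exp_neg_sub_exp_neg_le ha hb).trans ?_
    rw [← hφ₁val, ← integral_sub_left_eq_self φ₁ volume x]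
    exact abs_integral_mul_sub_integral_mul_le hφx (fun u => hφ₁nn _)
      (hρmem.integrable_mul hφx) (hψmem.integrable_mul hφx) hK
  have hpoint : ∀ y z, |Real.exp (-a) * ρ y * ρ z - Real.exp (-b) * ψ y * ψ z|
      ≤ (2 * M + Φ₁ * M ^ 2) * K := fun y z =>
    abs_mul_mul_sub_mul_mul_le (Real.exp_pos _).le (Real.exp_le_one_iff.2 (neg_nonpos.2 ha))
      hexp (hK y) (hK z) (hρle z) (hψle y) (hψle z)
  have hc₁x : Integrable (fun p : Rd d × Rd d => c₁ p.1 p.2 x) (volume.prod volume) :=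
    Measure.volume_eq_prod (Rd d) (Rd d) ▸ hc₁int₁₂ x
  have hmain := integral_integral_mul_le_mul hc₁x (fun y z => hc₁nn y z x)
    (fun y z => abs_nonneg _) hpoint
  rw [hc₁val₁₂ x] at hmain
  linarith

theorem statement9 {d : ℕ} (hd : 1 ≤ d)
    (c₁ : Rd d → Rd d → Rd d → ℝ) (C1 : ℝ)
    (hc₁meas : Measurable fun p : Rd d × Rd d × Rd d => c₁ p.1 p.2.1 p.2.2)
    (hc₁nn : ∀ x y z, 0 ≤ c₁ x y z)
    (hc₁sym : ∀ x y z, c₁ x y z = c₁ y x z)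
    (hc₁int₁₂ : ∀ z, Integrable fun p : Rd d × Rd d => c₁ p.1 p.2 z)
    (hc₁int₁₃ : ∀ y, Integrable fun p : Rd d × Rd d => c₁ p.1 y p.2)
    (hc₁int₂₃ : ∀ x, Integrable fun p : Rd d × Rd d => c₁ x p.1 p.2)
    (hc₁val₁₂ : ∀ z, (∫ x, ∫ y, c₁ x y z) = C1)
    (hc₁val₁₃ : ∀ y, (∫ x, ∫ z, c₁ x y z) = C1)
    (hc₁val₂₃ : ∀ x, (∫ y, ∫ z, c₁ x y z) = C1)
    (φ₁ : Rd d → ℝ) (Φ₁ : ℝ) (hφ₁meas : Measurable φ₁) (hφ₁nn : ∀ u, 0 ≤ φ₁ u)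
    (hφ₁int : Integrable φ₁) (hφ₁val : (∫ u, φ₁ u) = Φ₁)
    (ρ ψ : Rd d → ℝ) (hρmem : MemLinf ρ) (hρnn : ∀ x, 0 ≤ ρ x)
    (hψmem : MemLinf ψ) (hψnn : ∀ x, 0 ≤ ψ x)
    (M : ℝ) (hρM : linf ρ ≤ M) (hψM : linf ψ ≤ M) (x : Rd d) :
    1/2 * (∫ y, ∫ z, c₁ y z x * |Real.exp (-∫ u, φ₁ (x - u) * ρ u) * ρ y * ρ z
        - Real.exp (-∫ u, φ₁ (x - u) * ψ u) * ψ y * ψ z|)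
      ≤ 1/2 * C1 * (2 * M + Φ₁ * M^2) * linf (fun u => ρ u - ψ u) :=
  statement9_general c₁ C1 hc₁nn hc₁int₁₂ hc₁val₁₂ φ₁ Φ₁ hφ₁nn hφ₁int hφ₁val ρ ψ hρmem hρnn hψmem
    hψnn M hρM hψM x
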